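/- Let x(t) = x₀ + Σ_{n=1}^{2}(x_{2n−1}cos(nωt) + x_{2n}sin(nωt)) be a trigonometric polynomial of degree 2. Then x³ is a trigonometric polynomial of degree 6, and when x³ is sampled at M = 5 equally spaced points per period, the computed discrete Fourier constant term differs from the true constant term of x³ by (3/4)(x₃² − x₄²)x₁ − (3/2)x₂x₃x₄ (the aliasing contamination of the 5th harmonic onto the constant term). -/

import Mathlib

/-!
Expanding the cube gives `x³ = a₀ + ∑_{k=1}^{6} (a_k cos kt + b_k sin kt)`. Integration over a
period kills every harmonic but the constant one. At the `M` points `2πj/M`, the values of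
`cos kt` and `sin kt` are the real and imaginary parts of the `k`-th powers of the `M`-th roots of
unity, so their sums vanish unless `M ∣ k`, when `cos kt ≡ 1` and `sin kt ≡ 0` there. With
`M = 5` and `k ≤ 6` only `k = 5` survives, so the discrete mean is `a₀ + a₅`.
-/

open Real Finset intervalIntegral

lemma sin_nat_mul_two_pi (k : ℕ) : sin (k * (2 * π)) = 0 := by
  rw [← mul_assoc, mul_comm (k : ℝ) 2]
  exact_mod_cast sin_nat_mul_pi (2 * k)

lemma sum_sample_eq_sum_range (M k : ℕ) (f : ℝ → ℝ) :
    ∑ j ∈ Icc 1 M, f (k * (2 * π * j / M)) =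
      ∑ i ∈ range M, f (2 * π * k / M * i + 2 * π * k / M) := by
  rw [← Ico_add_one_right_eq_Icc, sum_Ico_eq_sum_range, add_tsub_cancel_right]
  refine sum_congr rfl fun i _ => congrArg f ?_
  push_cast
  ring

lemma sin_sample_half_period {M : ℕ} (hM : M ≠ 0) (k : ℕ) :
    sin (M * (2 * π * k / M) / 2) = 0 := by
  rw [← sin_nat_mul_pi k]
  congr 1
  field_simp

lemma sample_angle_ne_int_mul_two_pi {M k : ℕ} (hM : M ≠ 0) (hk : ¬ M ∣ k) (n : ℤ) :
    2 * π * k / M ≠ n * (2 * π) := by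
  intro hn
  have : ((k : ℤ) : ℝ) = ((n * M : ℤ) : ℝ) := by push_cast; field_simp at hn; linarith
  exact hk (Int.natCast_dvd_natCast.mp ⟨n, by rw [mul_comm]; exact_mod_cast this⟩)

lemma sum_cos_sample {M : ℕ} (hM : M ≠ 0) (k : ℕ) :
    ∑ j ∈ Icc 1 M, cos (k * (2 * π * j / M)) = if M ∣ k then (M : ℝ) else 0 := by
  split_ifs with hk
  · obtain ⟨m, rfl⟩ := hk
    have hterm (j : ℕ) : cos ((M * m : ℕ) * (2 * π * j / M)) = 1 := by
      rw [← cos_nat_mul_two_pi (m * j)]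
      congr 1
      push_cast
      field_simp
    simp only [hterm, sum_const, Nat.card_Icc, add_tsub_cancel_right, nsmul_one]
  · rw [sum_sample_eq_sum_range, sum_cos M (sample_angle_ne_int_mul_two_pi hM hk),
      sin_sample_half_period hM, zero_mul, zero_div]

lemma sum_sin_sample {M : ℕ} (hM : M ≠ 0) (k : ℕ) :
    ∑ j ∈ Icc 1 M, sin (k * (2 * π * j / M)) = 0 := by
  by_cases hk : M ∣ k
  · obtain ⟨m, rfl⟩ := hk
    refine sum_eq_zero fun j _ => ?_
    rw [← sin_nat_mul_two_pi (m * j)]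
    congr 1
    push_cast
    field_simp
  · rw [sum_sample_eq_sum_range, sum_sin M (sample_angle_ne_int_mul_two_pi hM hk),
      sin_sample_half_period hM, zero_mul, zero_div]

lemma integral_cos_nat_mul {k : ℕ} (hk : k ≠ 0) : ∫ t in (0 : ℝ)..2 * π, cos (k * t) = 0 := by
  rw [integral_comp_mul_left _ (Nat.cast_ne_zero.mpr hk), integral_cos, mul_zero, sin_zero,
    sin_nat_mul_two_pi, sub_zero, smul_zero]

lemma integral_sin_nat_mul (k : ℕ) : ∫ t in (0 : ℝ)..2 * π, sin (k * t) = 0 := by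
  rcases eq_or_ne k 0 with rfl | hk
  · simp
  rw [integral_comp_mul_left _ (Nat.cast_ne_zero.mpr hk), integral_sin, mul_zero, cos_zero,
    cos_nat_mul_two_pi, sub_self, smul_zero]

noncomputable def trigPoly (K : ℕ) (a b : ℕ → ℝ) (t : ℝ) : ℝ :=
  a 0 + ∑ k ∈ Icc 1 K, (a k * cos (k * t) + b k * sin (k * t))

lemma sum_trigPoly_sample {M : ℕ} (hM : M ≠ 0) (K : ℕ) (a b : ℕ → ℝ) :
    ∑ j ∈ Icc 1 M, trigPoly K a b (2 * π * j / M) =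
      M * (a 0 + ∑ k ∈ Icc 1 K with M ∣ k, a k) := by
  have hswap : ∑ j ∈ Icc 1 M, ∑ k ∈ Icc 1 K,
      (a k * cos (k * (2 * π * j / M)) + b k * sin (k * (2 * π * j / M))) =
        ∑ k ∈ Icc 1 K, (a k * ∑ j ∈ Icc 1 M, cos (k * (2 * π * j / M)) +
          b k * ∑ j ∈ Icc 1 M, sin (k * (2 * π * j / M))) := by
    rw [sum_comm]
    simp only [sum_add_distrib, mul_sum]
  simp only [trigPoly]
  rw [sum_add_distrib, hswap]
  simp only [sum_cos_sample hM, sum_sin_sample hM, sum_const, Nat.card_Icc, add_tsub_cancel_right,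
    nsmul_eq_mul, mul_zero, add_zero, mul_ite, sum_ite, mul_comm _ (M : ℝ), mul_add, mul_sum]

lemma integral_trigPoly (K : ℕ) (a b : ℕ → ℝ) :
    ∫ t in (0 : ℝ)..2 * π, trigPoly K a b t = 2 * π * a 0 := by
  have hcos (k : ℕ) :
      IntervalIntegrable (fun t => a k * cos (k * t)) MeasureTheory.volume 0 (2 * π) :=
    (by fun_prop : Continuous _).intervalIntegrable _ _
  have hsin (k : ℕ) :
      IntervalIntegrable (fun t => b k * sin (k * t)) MeasureTheory.volume 0 (2 * π) :=
    (by fun_prop : Continuous _).intervalIntegrable _ _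
  have hsum : IntervalIntegrable (fun t => ∑ k ∈ Icc 1 K, (a k * cos (k * t) + b k * sin (k * t)))
      MeasureTheory.volume 0 (2 * π) :=
    (by fun_prop : Continuous _).intervalIntegrable _ _
  have hterm (k : ℕ) (hk : k ∈ Icc 1 K) :
      ∫ t in (0 : ℝ)..2 * π, (a k * cos (k * t) + b k * sin (k * t)) = 0 := by
    have hk0 : k ≠ 0 := by simp only [mem_Icc] at hk; omega
    rw [integral_add (hcos k) (hsin k), integral_const_mul, integral_const_mul,
      integral_cos_nat_mul hk0, integral_sin_nat_mul, mul_zero, mul_zero, add_zero]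
  unfold trigPoly
  rw [integral_add intervalIntegrable_const hsum,
    integral_finsetSum fun k _ => (hcos k).add (hsin k), sum_eq_zero hterm, integral_const,
    smul_eq_mul, sub_zero, add_zero]

noncomputable def cubeCosCoeff (x₀ x₁ x₂ x₃ x₄ : ℝ) : ℕ → ℝ
  | 0 => x₀ ^ 3 + 3 / 2 * x₀ * (x₁ ^ 2 + x₂ ^ 2 + x₃ ^ 2 + x₄ ^ 2) +
      3 / 4 * x₃ * (x₁ ^ 2 - x₂ ^ 2) + 3 / 2 * x₁ * x₂ * x₄
  | 1 => 3 * x₀ ^ 2 * x₁ + 3 / 4 * x₁ * (x₁ ^ 2 + x₂ ^ 2) + 3 / 2 * x₁ * (x₃ ^ 2 + x₄ ^ 2) +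
      3 * x₀ * (x₁ * x₃ + x₂ * x₄)
  | 2 => 3 * x₀ ^ 2 * x₃ + 3 / 4 * x₃ * (x₃ ^ 2 + x₄ ^ 2) + 3 / 2 * x₃ * (x₁ ^ 2 + x₂ ^ 2) +
      3 / 2 * x₀ * (x₁ ^ 2 - x₂ ^ 2)
  | 3 => 1 / 4 * x₁ ^ 3 - 3 / 4 * x₁ * x₂ ^ 2 + 3 / 4 * x₁ * (x₃ ^ 2 - x₄ ^ 2) +
      3 / 2 * x₂ * x₃ * x₄ + 3 * x₀ * (x₁ * x₃ - x₂ * x₄)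
  | 4 => 3 / 4 * x₃ * (x₁ ^ 2 - x₂ ^ 2) - 3 / 2 * x₁ * x₂ * x₄ + 3 / 2 * x₀ * (x₃ ^ 2 - x₄ ^ 2)
  | 5 => 3 / 4 * (x₃ ^ 2 - x₄ ^ 2) * x₁ - 3 / 2 * x₂ * x₃ * x₄
  | 6 => 1 / 4 * x₃ ^ 3 - 3 / 4 * x₃ * x₄ ^ 2
  | _ => 0

noncomputable def cubeSinCoeff (x₀ x₁ x₂ x₃ x₄ : ℝ) : ℕ → ℝ
  | 1 => 3 * x₀ ^ 2 * x₂ + 3 / 4 * x₂ * (x₁ ^ 2 + x₂ ^ 2) + 3 / 2 * x₂ * (x₃ ^ 2 + x₄ ^ 2) +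
      3 * x₀ * (x₁ * x₄ - x₂ * x₃)
  | 2 => 3 * x₀ ^ 2 * x₄ + 3 / 4 * x₄ * (x₃ ^ 2 + x₄ ^ 2) + 3 / 2 * x₄ * (x₁ ^ 2 + x₂ ^ 2) +
      3 * x₀ * x₁ * x₂
  | 3 => 3 / 4 * x₁ ^ 2 * x₂ - 1 / 4 * x₂ ^ 3 - 3 / 4 * x₂ * (x₃ ^ 2 - x₄ ^ 2) +
      3 / 2 * x₁ * x₃ * x₄ + 3 * x₀ * (x₁ * x₄ + x₂ * x₃)
  | 4 => 3 / 4 * x₄ * (x₁ ^ 2 - x₂ ^ 2) + 3 / 2 * x₁ * x₂ * x₃ + 3 * x₀ * x₃ * x₄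
  | 5 => 3 / 4 * x₂ * (x₃ ^ 2 - x₄ ^ 2) + 3 / 2 * x₁ * x₃ * x₄
  | 6 => 3 / 4 * x₃ ^ 2 * x₄ - 1 / 4 * x₄ ^ 3
  | _ => 0

lemma cube_eq_trigPoly (x₀ x₁ x₂ x₃ x₄ t : ℝ) :
    (x₀ + x₁ * cos t + x₂ * sin t + x₃ * cos (2 * t) + x₄ * sin (2 * t)) ^ 3 =
      trigPoly 6 (cubeCosCoeff x₀ x₁ x₂ x₃ x₄) (cubeSinCoeff x₀ x₁ x₂ x₃ x₄) t := by
  simp only [trigPoly, sum_Icc_succ_top, Icc_self, sum_singleton, Nat.reduceLeDiff, Nat.reduceAdd,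
    Nat.cast_ofNat, Nat.cast_one, one_mul, cubeCosCoeff, cubeSinCoeff]
  rw [show (6 : ℝ) * t = 5 * t + t by ring, show (5 : ℝ) * t = 4 * t + t by ring,
    show (4 : ℝ) * t = 3 * t + t by ring, show (3 : ℝ) * t = 2 * t + t by ring]
  simp only [cos_add, sin_add, cos_two_mul, sin_two_mul]
  grind [sin_sq_add_cos_sq]

lemma sample_mean_sub_mean_trigPoly {M : ℕ} (hM : M ≠ 0) (K : ℕ) (a b : ℕ → ℝ) :
    1 / (M : ℝ) * ∑ j ∈ Icc 1 M, trigPoly K a b (2 * π * j / M) -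
        1 / (2 * π) * ∫ t in (0 : ℝ)..2 * π, trigPoly K a b t =
      ∑ k ∈ Icc 1 K with M ∣ k, a k := by
  rw [sum_trigPoly_sample hM, integral_trigPoly]
  field_simp
  ring

theorem HDHB_aliasing_N2 (x₀ x₁ x₂ x₃ x₄ : ℝ) (x : ℝ → ℝ)
    (hx : ∀ t, x t = x₀ + x₁ * Real.cos t + x₂ * Real.sin t +
        x₃ * Real.cos (2 * t) + x₄ * Real.sin (2 * t)) :
    (∃ c d : ℕ → ℝ, ∀ t, (x t) ^ 3 = c 0 + ∑ n ∈ Finset.Icc 1 6,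
        (c n * Real.cos (n * t) + d n * Real.sin (n * t))) ∧
    (1 / (5 : ℝ)) * ∑ j ∈ Finset.Icc (1 : ℕ) 5, (x (2 * π * (j : ℝ) / 5)) ^ 3 -
        (1 / (2 * π)) * ∫ θ in (0 : ℝ)..(2 * π), (x θ) ^ 3 =
      (3 / 4) * (x₃ ^ 2 - x₄ ^ 2) * x₁ - (3 / 2) * x₂ * x₃ * x₄ := by
  have hcube (t : ℝ) :
      x t ^ 3 = trigPoly 6 (cubeCosCoeff x₀ x₁ x₂ x₃ x₄) (cubeSinCoeff x₀ x₁ x₂ x₃ x₄) t := by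
    rw [hx, cube_eq_trigPoly]
  refine ⟨⟨_, _, hcube⟩, ?_⟩
  have haliasing := sample_mean_sub_mean_trigPoly (M := 5) (by norm_num) 6
    (cubeCosCoeff x₀ x₁ x₂ x₃ x₄) (cubeSinCoeff x₀ x₁ x₂ x₃ x₄)
  have haliased : ({k ∈ Icc 1 6 | 5 ∣ k} : Finset ℕ) = {5} := by decide
  rw [Nat.cast_ofNat, haliased, sum_singleton] at haliasing
  simp only [hcube]
  exact haliasing
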